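/- Let λ be a regular uncountable cardinal. Suppose G*₀ ⊆ Q⁰_λ is (<λ)-directed with respect to the order ≤_{Q⁰_λ} and fil(G*₀) is an ultrafilter on λ. If the family F₀ = {f_p : p ∈ G*₀} is not a dominating family in ^λλ, then λ is a measurable cardinal. -/

import Mathlib

/-!
Fix `g : λ → λ` that is not dominated by any `f_p`, `p ∈ G*₀`, and let `h ξ` be the supremum of
the closure points of `g` that are `≤ ξ`. The witness is the image of `fil(G*₀)` under `h`. It is an
ultrafilter because `fil(G*₀)` is, and it is non-principal because every fibre of `h` is bounded
while members of `fil(G*₀)` are unbounded.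

For `λ`-completeness, suppose fewer than `λ` sets lie in the image but their intersection does not.
By directedness a single `s ∈ G*₀` has all their preimages, and the complement of the preimage of
the intersection, in `fil(s)`; beyond some `ε < λ` all of them are `d^s_δ`-large, hence meet every
block `Z^s_δ`. So `h` cannot be constant on a late block. But `g β ≥ f_s β` for some `β > ε`, and
the block starting at `δ = min (C^s \ (β + 1))` ends before `f_s β`, since `C^s ∩ f_s β` has order
type `ω·β + ω > β + 1`: no closure point of `g` lies inside it, so `h` is constant there.
-/

open Set Ordinal Cardinal

noncomputable section

namespace Sh830

/-- `D` is a (proper) ultrafilter on the set `Z` of ordinals. -/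
def IsUltraOn (Z : Set Ordinal) (D : Set (Set Ordinal)) : Prop :=
  (∀ A ∈ D, A ⊆ Z) ∧ Z ∈ D ∧ ∅ ∉ D ∧
  (∀ A B : Set Ordinal, A ∈ D → A ⊆ B → B ⊆ Z → B ∈ D) ∧
  (∀ A B : Set Ordinal, A ∈ D → B ∈ D → A ∩ B ∈ D) ∧
  (∀ A : Set Ordinal, A ⊆ Z → A ∈ D ∨ Z \ A ∈ D)

/-- `D` is an ultrafilter on `λ`, where `λ` is identified with the set of ordinals `< λ`. -/
def IsUltrafilterOn (l : Ordinal) (D : Set (Set Ordinal)) : Prop :=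
  IsUltraOn (Iio l) D

/-- `D` is uniform: every member of `D` has cardinality `λ`. -/
def IsUniformOn (l : Ordinal) (D : Set (Set Ordinal)) : Prop :=
  ∀ A ∈ D, #A = #(Iio l)

/-- `C` is a club (closed and unbounded) subset of `λ`. -/
def IsClubIn (C : Set Ordinal) (l : Ordinal) : Prop :=
  C ⊆ Iio l ∧
  (∀ δ, δ < l → δ ≠ 0 → sSup (C ∩ Iio δ) = δ → δ ∈ C) ∧
  (∀ α, α < l → ∃ β ∈ C, α < β)

/-- The quotient `D/f = {A ⊆ λ : f⁻¹(A) ∈ D}`. -/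
def quotUF (l : Ordinal) (D : Set (Set Ordinal)) (f : Ordinal → Ordinal) :
    Set (Set Ordinal) :=
  {A | A ⊆ Iio l ∧ Iio l ∩ f ⁻¹' A ∈ D}

/-- The family `F_λ` of all non-decreasing functions `λ → λ` with unbounded range. -/
def Flam (l : Ordinal) : Set (Ordinal → Ordinal) :=
  {f | (∀ α, α < l → f α < l) ∧ (∀ α β, α ≤ β → β < l → f α ≤ f β) ∧
    (∀ γ, γ < l → ∃ α, α < l ∧ γ ≤ f α)}

/-- `D` is weakly reasonable: for every `f ∈ F_λ` there is a club `C` of `λ` with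
`∪ {[δ, δ + f δ) : δ ∈ C} ∉ D`. -/
def WeaklyReasonable (l : Ordinal) (D : Set (Set Ordinal)) : Prop :=
  ∀ f ∈ Flam l, ∃ C, IsClubIn C l ∧ (⋃ δ ∈ C, Ico δ (δ + f δ)) ∉ D

/-- The order type of a set of ordinals: the (unique) ordinal order-isomorphic to it. -/
def setOtp (S : Set Ordinal) : Ordinal :=
  sInf {o : Ordinal | Nonempty (Iio o ≃o S)}

/-- `min(β/E)`: the least element of the `E`-equivalence class of `β`. -/
def minClass (E : Ordinal → Ordinal → Prop) (β : Ordinal) : Ordinal :=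
  sInf {γ | E γ β}

/-- The function `f_E` associated with an equivalence relation `E`:
`f_E α = otp {β < α : β = min(β/E) < min(α/E)}`. -/
def fEquiv (E : Ordinal → Ordinal → Prop) (α : Ordinal) : Ordinal :=
  setOtp {β | β < α ∧ β = minClass E β ∧ minClass E β < minClass E α}

/-- The equivalence relation `E_C` associated with a club `C`:
`α E_C β` iff `(∀ γ ∈ C)(α < γ ↔ β < γ)`. -/
def clubRel (C : Set Ordinal) (α β : Ordinal) : Prop :=
  ∀ γ ∈ C, (α < γ ↔ β < γ)

/-- The quotient `D/C = D/E_C = D/f_{E_C}`. -/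
def quotClub (l : Ordinal) (D : Set (Set Ordinal)) (C : Set Ordinal) :
    Set (Set Ordinal) :=
  quotUF l D (fEquiv (clubRel C))

/-- A strategy for Odd in the game `⅁_D`: given `i < λ`, Even's moves `β_j = α_{2j}`
for `j ≤ i`, and Odd's previous moves `γ_j = α_{2j+1}` for `j < i`, it produces
Odd's move `γ_i = α_{2i+1}`. -/
def OddStr : Type 1 :=
  (i : Ordinal) → ((j : Ordinal) → j ≤ i → Ordinal) → ((j : Ordinal) → j < i → Ordinal) → Ordinal

/-- A legal position of the game just before Odd's `i`-th move. -/
def IsPosition (l i : Ordinal) (β γ : Ordinal → Ordinal) : Prop :=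
  i < l ∧ (∀ j, j ≤ i → β j < l) ∧ (∀ j, j < i → β j < γ j ∧ γ j < l) ∧
  (∀ j, j < i → γ j < β (j + 1)) ∧
  (∀ j, j ≤ i → Order.IsSuccLimit j → β j = sSup (γ '' Iio j))

/-- A complete legal play of the game of length `λ`: `β i` is `α_{2i}`
(Even's move) and `γ i` is `α_{2i+1}` (Odd's move). -/
def IsPlay (l : Ordinal) (β γ : Ordinal → Ordinal) : Prop :=
  (∀ i, i < l → β i < l ∧ γ i < l) ∧ (∀ i, i < l → β i < γ i) ∧
  (∀ i, i + 1 < l → γ i < β (i + 1)) ∧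
  (∀ i, i < l → Order.IsSuccLimit i → β i = sSup (γ '' Iio i))

/-- `st` is a legal strategy for Odd: at every legal position it produces a legal move,
i.e. an ordinal `α_{2i+1}` with `α_{2i} < α_{2i+1} < λ`. -/
def IsOddStrategy (l : Ordinal) (st : OddStr) : Prop :=
  ∀ i β γ, IsPosition l i β γ →
    β i < st i (fun j _ => β j) (fun j _ => γ j) ∧
    st i (fun j _ => β j) (fun j _ => γ j) < l

/-- The play `(β, γ)` follows the strategy `st` of Odd. -/
def FollowsOdd (l : Ordinal) (st : OddStr) (β γ : Ordinal → Ordinal) : Prop :=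
  ∀ i, i < l → γ i = st i (fun j _ => β j) (fun j _ => γ j)

/-- `st` is winning for Odd in `⅁_D`: in every play following it, Even loses, i.e.
`∪ {[α_{2i+1}, α_{2i+2}) : i < λ} ∉ D`. -/
def OddWinsWith (l : Ordinal) (D : Set (Set Ordinal)) (st : OddStr) : Prop :=
  ∀ β γ, IsPlay l β γ → FollowsOdd l st β γ →
    (⋃ i ∈ Iio l, Ico (γ i) (β (i + 1))) ∉ D

/-- The next element of `C` above `δ`, i.e. `min (C \ (δ+1))`. -/
def nxt (C : Set Ordinal) (δ : Ordinal) : Ordinal := sInf (C ∩ Ioi δ)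

/-- A condition of the forcing notion `Q¹_λ`; here `Z^p_δ = [δ, nxt C δ)` and
`d δ` is the ultrafilter `d^p_δ` on `Z^p_δ`. -/
structure Q1 (l : Ordinal) where
  γ : Ordinal
  C : Set Ordinal
  d : Ordinal → Set (Set Ordinal)
  γ_lt : γ < l
  club : IsClubIn C l
  lim : ∀ δ ∈ C, Order.IsSuccLimit δ
  ultra : ∀ δ ∈ C, IsUltraOn (Ico δ (nxt C δ)) (d δ)

/-- The order of `Q¹_λ`. -/
def Q1le (l : Ordinal) (p q : Q1 l) : Prop :=
  p.γ ≤ q.γ ∧ p.C ∩ Iio p.γ ⊆ q.C ∧ q.C ⊆ p.C ∧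
  ∀ δ ∈ q.C, ∀ A ∈ q.d δ,
    ∃ ζ ∈ p.C ∩ Ico δ (nxt q.C δ), A ∩ Ico ζ (nxt p.C ζ) ∈ p.d ζ

/-- A condition of the forcing notion `Q⁰_λ`; here `Z^p_δ = [δ, nxt C δ)` and
`d δ` is the ultrafilter `d^p_δ` on `Z^p_δ`. -/
structure Q0 (l : Ordinal) where
  C : Set Ordinal
  d : Ordinal → Set (Set Ordinal)
  club : IsClubIn C l
  lim : ∀ δ ∈ C, Order.IsSuccLimit δ
  ultra : ∀ δ ∈ C, IsUltraOn (Ico δ (nxt C δ)) (d δ)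

/-- The order relation of `Q⁰_λ`, on the underlying data. -/
def Q0leAux (Cp : Set Ordinal) (dp : Ordinal → Set (Set Ordinal))
    (Cq : Set Ordinal) (dq : Ordinal → Set (Set Ordinal)) : Prop :=
  Cq ⊆ Cp ∧ ∀ δ ∈ Cq, ∀ A ∈ dq δ,
    ∃ ζ ∈ Cp ∩ Ico δ (nxt Cq δ), A ∩ Ico ζ (nxt Cp ζ) ∈ dp ζ

/-- The order `≤_{Q⁰_λ}`. -/
def Q0le (l : Ordinal) (p q : Q0 l) : Prop := Q0leAux p.C p.d q.C q.d

/-- The relation `≤*_{Q⁰_λ}`: for some `α < λ` the restrictions beyond `α` are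
`≤_{Q⁰_λ}`-related. -/
def Q0leStar (l : Ordinal) (p q : Q0 l) : Prop :=
  ∃ α, α < l ∧ Q0leAux (p.C \ Iio α) p.d (q.C \ Iio α) q.d

/-- `fil(p) = {A ⊆ λ : (∃ ε < λ)(∀ δ ∈ C^p \ ε)(A ∩ Z^p_δ ∈ d^p_δ)}`. -/
def fil (l : Ordinal) (p : Q0 l) : Set (Set Ordinal) :=
  {A | A ⊆ Iio l ∧ ∃ ε, ε < l ∧ ∀ δ ∈ p.C, ε ≤ δ → A ∩ Ico δ (nxt p.C δ) ∈ p.d δ}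

/-- `fil(G*) = ∪ {fil(p) : p ∈ G*}`. -/
def filG (l : Ordinal) (G : Set (Q0 l)) : Set (Set Ordinal) := ⋃ p ∈ G, fil l p

/-- The relation `≤⁰`: `p ≤⁰ q` iff `fil(p) ⊆ fil(q)`. -/
def le0 (l : Ordinal) (p q : Q0 l) : Prop := fil l p ⊆ fil l q

/-- `G` is `(<c)`-directed with respect to `le`: `G` is nonempty and every subset of `G`
of cardinality `< c` has an upper bound in `G`. -/
def DirLtOn (l : Ordinal) (c : Cardinal.{1}) (G : Set (Q0 l))
    (le : Q0 l → Q0 l → Prop) : Prop :=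
  G.Nonempty ∧ ∀ S : Set (Q0 l), S ⊆ G → #S < c → ∃ r ∈ G, ∀ p ∈ S, le p r

/-- The sum `⊕^e {d_x : x ∈ X}` of ultrafilters `d x` on `Z x` along an ultrafilter `e`
on `X`. -/
def ufSum (X : Set Ordinal) (e : Set (Set Ordinal)) (Z : Ordinal → Set Ordinal)
    (d : Ordinal → Set (Set Ordinal)) : Set (Set Ordinal) :=
  {A | A ⊆ (⋃ x ∈ X, Z x) ∧ {x | x ∈ X ∧ Z x ∩ A ∈ d x} ∈ e}

/-- The function `f_p` associated with `p ∈ Q⁰_λ`: `f_p α` is the member of `C^p` with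
`otp (C^p ∩ f_p α) = ω·α + ω`. -/
def fP (l : Ordinal) (p : Q0 l) (α : Ordinal) : Ordinal :=
  sInf {β | β ∈ p.C ∧ setOtp (p.C ∩ Iio β) = Ordinal.omega0 * α + Ordinal.omega0}

/-- The space `^λλ` (functions below `l` matter). -/
def funSp (l : Ordinal) : Set (Ordinal → Ordinal) := {f | ∀ α, α < l → f α < l}

/-- `F` is a dominating family in `^λλ`. -/
def IsDominating (l : Ordinal) (F : Set (Ordinal → Ordinal)) : Prop :=
  ∀ g ∈ funSp l, ∃ f ∈ F, ∃ α, α < l ∧ ∀ β, α < β → β < l → g β < f β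

/-- The dominating number `𝔡_λ`. -/
def dLam (l : Ordinal) : Cardinal.{1} :=
  sInf {c : Cardinal | ∃ F : Set (Ordinal → Ordinal),
    F ⊆ funSp l ∧ IsDominating l F ∧ #F = c}

/-- `S` is non-stationary in `λ`. -/
def NonStatIn (S : Set Ordinal) (l : Ordinal) : Prop :=
  ∃ C, IsClubIn C l ∧ S ∩ C = ∅

/-- `F` is a club-dominating family in `^λλ`. -/
def IsClubDominating (l : Ordinal) (F : Set (Ordinal → Ordinal)) : Prop :=
  ∀ g ∈ funSp l, ∃ f ∈ F, NonStatIn {β | β < l ∧ f β ≤ g β} l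

/-- The club-dominating number `𝔡_{cl(λ)}`. -/
def dClubLam (l : Ordinal) : Cardinal.{1} :=
  sInf {c : Cardinal | ∃ F : Set (Ordinal → Ordinal),
    F ⊆ funSp l ∧ IsClubDominating l F ∧ #F = c}

/-- `A` is a nowhere dense subset of the space `^λλ` (with basic open sets determined
by initial segments). -/
def IsNwd (l : Ordinal) (A : Set (Ordinal → Ordinal)) : Prop :=
  A ⊆ funSp l ∧
  ∀ s ∈ funSp l, ∀ α, α < l → ∃ t ∈ funSp l, ∃ α', α ≤ α' ∧ α' < l ∧
    (∀ β, β < α → t β = s β) ∧ ∀ f ∈ funSp l, (∀ β, β < α' → f β = t β) → f ∉ A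

/-- `A` belongs to the ideal `M^λ_{λ,λ}`, the `(<λ)`-complete ideal generated by the
nowhere dense subsets of `^λλ`. -/
def InMIdeal (l : Ordinal) (A : Set (Ordinal → Ordinal)) : Prop :=
  A ⊆ funSp l ∧ ∃ θ, θ < l ∧ ∃ B : Ordinal → Set (Ordinal → Ordinal),
    (∀ i, i < θ → IsNwd l (B i)) ∧ A ⊆ ⋃ i ∈ Iio θ, B i

/-- The covering number `cov(M^λ_{λ,λ})`. -/
def covM (l : Ordinal) : Cardinal.{1} :=
  sInf {c : Cardinal | ∃ S : Set (Set (Ordinal → Ordinal)),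
    (∀ A ∈ S, InMIdeal l A) ∧ funSp l ⊆ ⋃₀ S ∧ #S = c}

universe u v

theorem le_of_orderEmbedding_Iio {a b : Ordinal.{u}} (f : Iio a ↪o Iio b) : a ≤ b := by
  rw [← type_toType a, ← type_toType b, type_le_iff']
  exact ⟨OrderEmbedding.ltEmbedding
    ((ToType.mk.symm.toOrderEmbedding.trans f).trans ToType.mk.toOrderEmbedding)⟩

theorem setOtp_eq_of_orderIso {S : Set Ordinal.{u}} {o : Ordinal.{u}} (e : Iio o ≃o S) :
    setOtp.{u, u} S = o := by
  have hunique : {o' : Ordinal.{u} | Nonempty (Iio o' ≃o S)} = {o} := by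
    refine Set.ext fun o' => ⟨fun ⟨e'⟩ => ?_, fun h => h ▸ ⟨e⟩⟩
    exact le_antisymm (le_of_orderEmbedding_Iio (e'.trans e.symm).toOrderEmbedding)
      (le_of_orderEmbedding_Iio (e.trans e'.symm).toOrderEmbedding)
  rw [setOtp, hunique, csInf_singleton]

theorem setOtp_le_of_subset_Iio {S : Set Ordinal.{u}} {b : Ordinal.{u}} (hS : S ⊆ Iio b) :
    setOtp.{u, u} S ≤ b := by
  rcases eq_empty_or_nonempty {o : Ordinal.{u} | Nonempty (Iio o ≃o S)} with h | h
  · rw [setOtp, h, Ordinal.sInf_empty]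
    exact bot_le
  · obtain ⟨e⟩ := csInf_mem h
    exact le_of_orderEmbedding_Iio
      (e.toOrderEmbedding.trans (OrderEmbedding.ofStrictMono (Set.inclusion hS) fun _ _ h => h))

theorem iSup_lt_ord_of_lift_mk_lt {κ : Cardinal.{u}} (hreg : κ.IsRegular) {ι : Type v}
    (hι : Cardinal.lift.{u} #ι < Cardinal.lift.{v} κ) {F : ι → Ordinal.{u}}
    (hF : ∀ i, F i < κ.ord) : ⨆ i, F i < κ.ord :=
  Ordinal.lift_iSup_lt_of_lt_cof (by rwa [← Ordinal.lift_cof, hreg.cof_ord]) hF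

theorem lift_mk_Iio_lt_of_lt_ord {κ : Cardinal.{u}} {a : Ordinal.{u}} (ha : a < κ.ord) :
    Cardinal.lift.{u} #(Iio a) < Cardinal.lift.{u + 1} κ := by
  rw [Cardinal.mk_Iio_ordinal, Cardinal.lift_lift, Cardinal.lift_lt]
  exact Cardinal.lt_ord.1 ha

theorem exists_mem_setOtp_inter_Iio_eq {κ : Cardinal.{u}} (hreg : κ.IsRegular)
    {C : Set Ordinal.{u}} (hsub : C ⊆ Iio κ.ord) (hunb : ∀ α < κ.ord, ∃ β ∈ C, α < β)
    {ρ : Ordinal.{u}} (hρ : ρ < κ.ord) : ∃ x ∈ C, setOtp.{u, u} (C ∩ Iio x) = ρ := by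
  have hT : IsCofinal (C ∪ Ici κ.ord) := fun x =>
    ⟨max x κ.ord, Or.inr (mem_Ici.2 (le_max_right _ _)), le_max_left _ _⟩
  set e := Order.enum (C ∪ Ici κ.ord) hT
  have he_lt : ∀ σ < κ.ord, (e σ : Ordinal) < κ.ord := by
    intro σ
    induction σ using WellFoundedLT.induction with
    | _ σ ih =>
      intro hσ
      have hb : ⨆ τ : Iio σ, (e τ : Ordinal) < κ.ord :=
        iSup_lt_ord_of_lift_mk_lt hreg (lift_mk_Iio_lt_of_lt_ord hσ)
          fun τ => ih τ τ.2 (τ.2.trans hσ)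
      obtain ⟨c, hcC, hbc⟩ := hunb _ hb
      refine (Order.enum_le_of_forall_lt (show c ∈ C ∪ Ici κ.ord from Or.inl hcC)
        fun τ hτ => ?_).trans_lt (hsub hcC)
      exact (le_ciSup Ordinal.bddAbove_of_small (⟨τ, hτ⟩ : Iio σ)).trans_lt hbc
  have he_mem : ∀ σ < κ.ord, (e σ : Ordinal) ∈ C := fun σ hσ =>
    (e σ).2.resolve_right (not_le.2 (he_lt σ hσ))
  refine ⟨e ρ, he_mem ρ hρ, setOtp_eq_of_orderIso ?_⟩
  refine StrictMono.orderIsoOfSurjective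
    (fun σ => ⟨e σ, he_mem σ (σ.2.trans hρ), e.strictMono σ.2⟩) (fun _ _ h => e.strictMono h) ?_
  rintro ⟨c, hcC, hcρ⟩
  refine ⟨⟨e.symm ⟨c, Or.inl hcC⟩, ?_⟩, by simp⟩
  rw [mem_Iio, ← e.lt_iff_lt, OrderIso.apply_symm_apply]
  exact hcρ

theorem IsClubIn.nxt_mem_and_lt {C : Set Ordinal.{u}} {l δ : Ordinal.{u}} (hC : IsClubIn C l)
    (hδ : δ < l) : nxt C δ ∈ C ∧ δ < nxt C δ := by
  obtain ⟨β, hβC, hδβ⟩ := hC.2.2 δ hδ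
  exact csInf_mem (show (C ∩ Ioi δ).Nonempty from ⟨β, hβC, hδβ⟩)

theorem nxt_le {C : Set Ordinal.{u}} {δ x : Ordinal.{u}} (hx : x ∈ C) (hδx : δ < x) :
    nxt C δ ≤ x :=
  csInf_le' ⟨hx, hδx⟩

theorem omega0_mul_add_omega0_lt_ord {κ : Cardinal.{u}} (hκ : ℵ₀ < κ) {β : Ordinal.{u}}
    (hβ : β < κ.ord) : ω * β + ω < κ.ord := by
  have hω : ω < κ.ord := by rwa [Cardinal.lt_ord, card_omega0]
  exact isPrincipal_add_ord hκ.le (isPrincipal_mul_ord hκ.le hω hβ) hω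

theorem nxt_nxt_le_fP {κ : Cardinal.{u}} (hreg : κ.IsRegular) (hκ : ℵ₀ < κ) (p : Q0 κ.ord)
    {β : Ordinal.{u}} (hβ : β < κ.ord) : nxt p.C (nxt p.C β) ≤ fP κ.ord p β := by
  obtain ⟨x, hxC, hx⟩ := exists_mem_setOtp_inter_Iio_eq hreg p.club.1 p.club.2.2
    (omega0_mul_add_omega0_lt_ord hκ hβ)
  obtain ⟨hfC, hf⟩ : fP κ.ord p β ∈
      {x | x ∈ p.C ∧ setOtp (p.C ∩ Iio x) = ω * β + ω} := csInf_mem ⟨x, hxC, hx⟩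
  by_contra! hlt
  have hsub : p.C ∩ Iio (fP κ.ord p β) ⊆ Iio (β + 1) := by
    rintro c ⟨hcC, hcf⟩
    by_contra hβc
    rw [mem_Iio, not_lt, Order.add_one_le_iff] at hβc
    exact hlt.not_ge (nxt_le hfC ((nxt_le hcC hβc).trans_lt hcf))
  have hle := setOtp_le_of_subset_Iio hsub
  rw [hf] at hle
  refine hle.not_gt ?_
  calc β + 1 ≤ ω * β + 1 := by gcongr; exact Ordinal.le_mul_right β omega0_pos
    _ < ω * β + ω := (add_lt_add_iff_left _).2 one_lt_omega0

def closurePoints (g : Ordinal.{u} → Ordinal.{u}) : Set Ordinal.{u} := {δ | ∀ α < δ, g α < δ}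

theorem exists_mem_closurePoints_gt {κ : Cardinal.{u}} (hreg : κ.IsRegular) (hκ : ℵ₀ < κ)
    {g : Ordinal.{u} → Ordinal.{u}} (hg : ∀ α < κ.ord, g α < κ.ord) {α : Ordinal.{u}}
    (hα : α < κ.ord) : ∃ δ ∈ closurePoints g, α < δ ∧ δ < κ.ord := by
  have hlim := Cardinal.isSuccLimit_ord hκ.le
  set m : Ordinal.{u} → Ordinal.{u} := fun a => ⨆ γ : Iio a, Order.succ (g γ)
  have hm : ∀ a < κ.ord, m a < κ.ord := fun a ha =>
    iSup_lt_ord_of_lift_mk_lt hreg (lift_mk_Iio_lt_of_lt_ord ha) fun γ =>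
      hlim.succ_lt (hg γ (γ.2.trans ha))
  refine ⟨nfp m (Order.succ α), fun β hβ => ?_, (Order.lt_succ α).trans_le (le_nfp _ _),
    nfp_lt_ord (by rwa [hreg.cof_ord]) hm (hlim.succ_lt hα)⟩
  obtain ⟨n, hn⟩ := lt_nfp_iff.1 hβ
  calc g β < Order.succ (g β) := Order.lt_succ _
    _ ≤ m (m^[n] (Order.succ α)) :=
      le_ciSup (f := fun γ : Iio _ => Order.succ (g γ)) Ordinal.bddAbove_of_small ⟨β, hn⟩
    _ = m^[n + 1] (Order.succ α) := (Function.iterate_succ_apply' m n _).symm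
    _ ≤ nfp m (Order.succ α) := iterate_le_nfp m _ _

def lastBelow (E : Set Ordinal.{u}) (ξ : Ordinal.{u}) : Ordinal.{u} := sSup (E ∩ Iic ξ)

theorem lastBelow_le (E : Set Ordinal.{u}) (ξ : Ordinal.{u}) : lastBelow E ξ ≤ ξ :=
  csSup_le' fun _ h => h.2

theorem le_lastBelow {E : Set Ordinal.{u}} {η ξ : Ordinal.{u}} (hη : η ∈ E) (hηξ : η ≤ ξ) :
    η ≤ lastBelow E ξ :=
  le_csSup ⟨ξ, fun _ h => h.2⟩ ⟨hη, hηξ⟩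

theorem lastBelow_eq_of_forall_notMem {E : Set Ordinal.{u}} {δ ξ : Ordinal.{u}} (hδξ : δ ≤ ξ)
    (hE : ∀ η ∈ E, η ∉ Ioc δ ξ) : lastBelow E ξ = lastBelow E δ := by
  unfold lastBelow
  congr 1
  ext η
  refine ⟨fun ⟨hηE, hηξ⟩ => ⟨hηE, ?_⟩, fun ⟨hηE, hηδ⟩ => ⟨hηE, le_trans hηδ hδξ⟩⟩
  by_contra hηδ
  exact hE η hηE ⟨not_le.1 hηδ, hηξ⟩

theorem IsUltraOn.nonempty_of_mem {Z : Set Ordinal.{u}} {D : Set (Set Ordinal.{u})}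
    {A : Set Ordinal.{u}} (hD : IsUltraOn Z D) (hA : A ∈ D) : A.Nonempty :=
  nonempty_iff_ne_empty.2 fun h => hD.2.2.1 (h ▸ hA)

theorem IsUltraOn.diff_mem_of_notMem {Z : Set Ordinal.{u}} {D : Set (Set Ordinal.{u})}
    {A : Set Ordinal.{u}} (hD : IsUltraOn Z D) (hAZ : A ⊆ Z) (hA : A ∉ D) : Z \ A ∈ D :=
  (hD.2.2.2.2.2 A hAZ).resolve_left hA

theorem IsUltrafilterOn.quotUF {l : Ordinal.{u}} {D : Set (Set Ordinal.{u})}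
    {f : Ordinal.{u} → Ordinal.{u}} (hD : IsUltrafilterOn l D) (hf : ∀ ξ < l, f ξ < l) :
    IsUltrafilterOn l (quotUF l D f) := by
  obtain ⟨-, hZ, hempty, hup, hinter, hult⟩ := hD
  have hpre : Iio l ∩ f ⁻¹' Iio l = Iio l := inter_eq_left.2 fun ξ hξ => hf ξ hξ
  refine ⟨fun A hA => hA.1, ⟨subset_rfl, by rwa [hpre]⟩, fun h => hempty (by simpa using h.2),
    fun A B hA hAB hB => ⟨hB, hup _ _ hA.2 (inter_subset_inter_right _ (preimage_mono hAB))
      inter_subset_left⟩,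
    fun A B hA hB => ⟨inter_subset_left.trans hA.1, ?_⟩, fun A hA => ?_⟩
  · rw [preimage_inter, inter_inter_distrib_left]
    exact hinter _ _ hA.2 hB.2
  · refine (hult _ inter_subset_left).imp (fun h => ⟨hA, h⟩) fun h => ⟨sdiff_subset, ?_⟩
    rwa [preimage_sdiff, inter_sdiff_distrib_left, hpre]

theorem fil_mono {l : Ordinal.{u}} {p q : Q0 l} (hpq : Q0le l p q) : fil l p ⊆ fil l q := by
  rintro A ⟨hAl, ε, hε, hA⟩
  refine ⟨hAl, ε, hε, fun δ hδ hεδ => ?_⟩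
  by_contra hnot
  obtain ⟨ζ, ⟨hζC, hδζ, -⟩, hζ⟩ :=
    hpq.2 δ hδ _ ((q.ultra δ hδ).diff_mem_of_notMem inter_subset_right hnot)
  obtain ⟨ξ, ⟨⟨hξZ, hξnot⟩, -⟩, hξA, -⟩ := (p.ultra ζ hζC).nonempty_of_mem
    ((p.ultra ζ hζC).2.2.2.2.1 _ _ hζ (hA ζ hζC (hεδ.trans hδζ)))
  exact hξnot ⟨hξA, hξZ⟩

theorem exists_gt_mem_of_mem_filG {l : Ordinal.{u}} {G : Set (Q0 l)} {A : Set Ordinal.{u}}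
    (hA : A ∈ filG l G) {α : Ordinal.{u}} (hα : α < l) : ∃ ξ ∈ A, α < ξ := by
  obtain ⟨p, -, -, ε, hε, hAp⟩ := mem_iUnion₂.1 hA
  obtain ⟨δ, hδC, hδ⟩ := p.club.2.2 _ (max_lt hα hε)
  obtain ⟨ξ, hξA, hδξ, -⟩ :=
    (p.ultra δ hδC).nonempty_of_mem (hAp δ hδC ((le_max_right _ _).trans hδ.le))
  exact ⟨ξ, hξA, (le_max_left _ _).trans_lt (hδ.trans_le hδξ)⟩

theorem DirLtOn.exists_subset_fil {l : Ordinal.{0}} {c : Cardinal.{1}} {G : Set (Q0 l)}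
    (hG : DirLtOn l c G (Q0le l)) {S : Set (Set Ordinal.{0})} (hS : S ⊆ filG l G)
    (hSc : #S < c) : ∃ s ∈ G, S ⊆ fil l s := by
  choose p hpG hAp using fun A : S => mem_iUnion₂.1 (hS A.2)
  obtain ⟨s, hsG, hs⟩ := hG.2 (range p) (range_subset_iff.2 hpG) (mk_range_le.trans_lt hSc)
  exact ⟨s, hsG, fun A hA => fil_mono (hs _ ⟨⟨A, hA⟩, rfl⟩) (hAp ⟨A, hA⟩)⟩

theorem exists_common_bound_of_subset_fil {κ : Cardinal.{u}} (hreg : κ.IsRegular)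
    (p : Q0 κ.ord) {S : Set (Set Ordinal.{u})} (hS : S ⊆ fil κ.ord p)
    (hSκ : #S < Cardinal.lift.{u + 1} κ) :
    ∃ ε < κ.ord, ∀ δ ∈ p.C, ε ≤ δ → ∀ A ∈ S, A ∩ Ico δ (nxt p.C δ) ∈ p.d δ := by
  choose ε hε hεA using fun A : S => (hS A.2).2
  refine ⟨⨆ A, ε A, iSup_lt_ord_of_lift_mk_lt hreg (by rwa [Cardinal.lift_id'.{u, u + 1}]) hε,
    fun δ hδ hεδ A hA => hεA ⟨A, hA⟩ δ hδ ((le_ciSup ?_ _).trans hεδ)⟩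
  exact ⟨κ.ord, by rintro _ ⟨A, rfl⟩; exact (hε A).le⟩

theorem inter_iInter_mem_quotUF {κ : Cardinal.{0}} (hreg : κ.IsRegular) {G : Set (Q0 κ.ord)}
    (hdir : DirLtOn κ.ord (Cardinal.lift.{1} κ) G (Q0le κ.ord))
    (hult : IsUltrafilterOn κ.ord (filG κ.ord G)) {f : Ordinal.{0} → Ordinal.{0}}
    (hf : ∀ ξ < κ.ord, f ξ < κ.ord)
    (hconst : ∀ s ∈ G, ∀ ε < κ.ord, ∃ δ ∈ s.C, ε ≤ δ ∧ ∀ ξ ∈ Ico δ (nxt s.C δ), f ξ = f δ)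
    {θ : Ordinal.{0}} (hθ : θ < κ.ord) {A : Ordinal.{0} → Set Ordinal.{0}}
    (hA : ∀ i < θ, A i ∈ quotUF κ.ord (filG κ.ord G) f) :
    Iio κ.ord ∩ ⋂ i ∈ Iio θ, A i ∈ quotUF κ.ord (filG κ.ord G) f := by
  refine ⟨inter_subset_left, ?_⟩
  by_contra hB
  set S := insert (Iio κ.ord \ (Iio κ.ord ∩ f ⁻¹' (Iio κ.ord ∩ ⋂ i ∈ Iio θ, A i)))
    (range fun i : Iio θ => Iio κ.ord ∩ f ⁻¹' A i)
  have hSG : S ⊆ filG κ.ord G := insert_subset (hult.diff_mem_of_notMem inter_subset_left hB)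
    (range_subset_iff.2 fun i => (hA i i.2).2)
  have hSκ : #S < Cardinal.lift.{1} κ := by
    have hκ := Cardinal.aleph0_le_lift.2 hreg.aleph0_le
    refine mk_insert_le.trans_lt (add_lt_of_lt hκ ?_ (one_lt_aleph0.trans_le hκ))
    exact mk_range_le.trans_lt (by simpa using lift_mk_Iio_lt_of_lt_ord hθ)
  obtain ⟨s, hsG, hSs⟩ := hdir.exists_subset_fil hSG hSκ
  obtain ⟨ε, hε, hεS⟩ := exists_common_bound_of_subset_fil hreg s hSs hSκ
  obtain ⟨δ, hδC, hεδ, hfδ⟩ := hconst s hsG ε hε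
  have hblock : ∀ X ∈ S, (X ∩ Ico δ (nxt s.C δ)).Nonempty := fun X hX =>
    (s.ultra δ hδC).nonempty_of_mem (hεS δ hδC hεδ X hX)
  obtain ⟨ξ, ⟨hξ, hξB⟩, hξZ⟩ := hblock _ (mem_insert _ _)
  refine hξB ⟨hξ, ?_⟩
  rw [mem_preimage, hfδ ξ hξZ]
  refine ⟨hf δ (s.club.1 hδC), mem_iInter₂.2 fun i hi => ?_⟩
  obtain ⟨ζ, ⟨-, hζA⟩, hζZ⟩ := hblock _ (mem_insert_of_mem _ ⟨⟨i, hi⟩, rfl⟩)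
  rwa [mem_preimage, hfδ ζ hζZ] at hζA

theorem exists_block_forall_notMem_closurePoints {κ : Cardinal.{u}} (hreg : κ.IsRegular)
    (hκ : ℵ₀ < κ) (s : Q0 κ.ord) {g : Ordinal.{u} → Ordinal.{u}}
    (hg : ∀ ε < κ.ord, ∃ β, ε < β ∧ β < κ.ord ∧ fP κ.ord s β ≤ g β) {ε : Ordinal.{u}}
    (hε : ε < κ.ord) : ∃ δ ∈ s.C, ε ≤ δ ∧ ∀ η ∈ closurePoints g, η ∉ Ioo δ (nxt s.C δ) := by
  obtain ⟨β, hεβ, hβ, hfg⟩ := hg ε hε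
  obtain ⟨hδC, hβδ⟩ := s.club.nxt_mem_and_lt hβ
  refine ⟨nxt s.C β, hδC, hεβ.le.trans hβδ.le, fun η hη hηZ => lt_irrefl (g β) ?_⟩
  calc g β < η := hη β (hβδ.trans hηZ.1)
    _ < nxt s.C (nxt s.C β) := hηZ.2
    _ ≤ fP κ.ord s β := nxt_nxt_le_fP hreg hκ s hβ
    _ ≤ g β := hfg

/-- Proposition "meas": if `G*₀ ⊆ Q⁰_λ` is `(<λ)`-directed w.r.t. `≤_{Q⁰_λ}`,
`fil(G*₀)` is an ultrafilter, and `{f_p : p ∈ G*₀}` is not dominating in `^λλ`, then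
`λ` is measurable, i.e. it carries a `λ`-complete non-principal ultrafilter. -/
theorem stmt19 (κ : Cardinal) (hreg : κ.IsRegular) (hunc : ℵ₀ < κ)
    (G : Set (Q0 κ.ord))
    (hdir : DirLtOn κ.ord (Cardinal.lift.{1,0} κ) G (Q0le κ.ord))
    (hult : IsUltrafilterOn κ.ord (filG κ.ord G))
    (hnd : ¬ IsDominating κ.ord {f | ∃ p ∈ G, f = fP κ.ord p}) :
    ∃ U : Set (Set Ordinal), IsUltrafilterOn κ.ord U ∧
      (∀ α, α < κ.ord → (Iio κ.ord \ {α}) ∈ U) ∧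
      (∀ θ, θ < κ.ord → ∀ A : Ordinal → Set Ordinal,
        (∀ i, i < θ → A i ∈ U) → (Iio κ.ord ∩ ⋂ i ∈ Iio θ, A i) ∈ U) := by
  obtain ⟨g, hg_lt, hg⟩ : ∃ g ∈ funSp κ.ord, ∀ p ∈ G, ∀ ε < κ.ord,
      ∃ β, ε < β ∧ β < κ.ord ∧ fP κ.ord p β ≤ g β := by
    simpa [IsDominating] using hnd
  set h := lastBelow (closurePoints g)
  have hh : ∀ ξ < κ.ord, h ξ < κ.ord := fun ξ hξ => (lastBelow_le _ ξ).trans_lt hξ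
  have hU := hult.quotUF hh
  refine ⟨quotUF κ.ord (filG κ.ord G) h, hU, fun α hα => ?_, fun θ hθ A hA => ?_⟩
  · refine hU.diff_mem_of_notMem (singleton_subset_iff.2 hα) fun hαU => ?_
    obtain ⟨η, hηE, hαη, hη⟩ := exists_mem_closurePoints_gt hreg hunc hg_lt hα
    obtain ⟨ξ, ⟨-, hξα⟩, hηξ⟩ := exists_gt_mem_of_mem_filG hαU.2 hη
    exact hαη.not_ge (mem_singleton_iff.1 hξα ▸ le_lastBelow hηE hηξ.le)
  · refine inter_iInter_mem_quotUF hreg hdir hult hh (fun s hs ε hε => ?_) hθ hA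
    obtain ⟨δ, hδC, hεδ, hδE⟩ :=
      exists_block_forall_notMem_closurePoints hreg hunc s (hg s hs) hε
    exact ⟨δ, hδC, hεδ, fun ξ hξ => lastBelow_eq_of_forall_notMem hξ.1
      fun η hη hηξ => hδE η hη ⟨hηξ.1, hηξ.2.trans_lt hξ.2⟩⟩

end Sh830

end
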